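/- arXiv:2209.10142 — 7 statements merged into one kernel-verified Lean document; each statement's English description precedes it below -/
import Mathlib

section
/- Let n ≥ 4 be an integer, let r₁, r₂, r₃ be nonnegative integers with r₁ + r₂ + r₃ = n − 1, and let α₁ ∈ (−1,1), α₂, α₃ ∈ [0,1) satisfy α₁ + α₂ + α₃ = 1, r₁ + α₁ ≥ r₂ + α₂ and r₁ + α₁ ≥ r₃ + α₃. Then L_n((r₁+α₁)/n, (r₂+α₂)/n, (r₃+α₃)/n) ≤ L_n((n−1+α₁)/n, α₂/n, α₃/n) + 2^{2n/3}·(10 + 2·ln n), where 2^{2n/3} denotes the real power. -/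
open Finset

/-- The fundamental Lagrange interpolation polynomial value `l_i(λ)` for
equally spaced nodes of the triangle, degree `n`. -/
noncomputable def lagPoly (n : ℕ) (lam : ℝ × ℝ × ℝ) (i : ℕ × ℕ × ℕ) : ℝ :=
  (Real.Gamma (n * lam.1 + 1) / (i.1.factorial * Real.Gamma (n * lam.1 - i.1 + 1))) *
  (Real.Gamma (n * lam.2.1 + 1) / (i.2.1.factorial * Real.Gamma (n * lam.2.1 - i.2.1 + 1))) *
  (Real.Gamma (n * lam.2.2 + 1) / (i.2.2.factorial * Real.Gamma (n * lam.2.2 - i.2.2 + 1)))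

/-- The Lebesgue function `L_n(λ)` of Lagrange interpolation at equally spaced
nodes of the triangle. -/
noncomputable def Leb (n : ℕ) (lam : ℝ × ℝ × ℝ) : ℝ :=
  ∑ i ∈ (Finset.range (n+1) ×ˢ Finset.range (n+1) ×ˢ Finset.range (n+1)).filter
      (fun i => i.1 + i.2.1 + i.2.2 = n), |lagPoly n lam i|

/-!
Write `C(x, j) = Ring.choose x j` for generalized binomial coefficients. With `(y, z, w) = n • λ`,
`l_i(λ) = C(y, i₁) * C(z, i₂) * C(w, i₃)`, so `L_n` is a trinomial convolution of the sequences
`|C(x, ·)|`. Moving one unit from `z` to `y` costs little: Pascal's rule gives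
`|C(z, j)| ≤ |C(z-1, j)| + |C(z-1, j-1)|`, while the reverse inequality
`|C(y, j)| + |C(y, j-1)| ≤ |C(y+1, j)|` can only fail for `j > y + 1`, where `|C(y, j)| ≤ 1/(y+1)`.
Since the row sums `∑ⱼ |C(x, j)|` are at most `2^(⌊x⌋+1)`, the move costs at most
`2^(⌊z⌋ + ⌊w⌋ + 2) / (y + 1)`, and these costs form a geometric series when the integer parts
`r₂` and then `r₃` are moved into the first coordinate. The total `2^(r₂+r₃+4) / (r₁+α₁+1)` is small
because `r₁ + α₁`, the largest of three numbers summing to `n`, is at least `n / 3`.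
-/

def simplex (n : ℕ) : Finset (ℕ × ℕ × ℕ) :=
  (range (n + 1) ×ˢ range (n + 1) ×ˢ range (n + 1)).filter (fun i => i.1 + i.2.1 + i.2.2 = n)

lemma mem_simplex {n : ℕ} {i : ℕ × ℕ × ℕ} : i ∈ simplex n ↔ i.1 + i.2.1 + i.2.2 = n := by
  simp only [simplex, mem_filter, mem_product, mem_range]
  omega

lemma sum_simplex_succ {M : Type*} [AddCommMonoid M] (n : ℕ) (F : ℕ × ℕ × ℕ → M)
    (hF : ∀ b c, F (0, b, c) = 0) :
    ∑ i ∈ simplex (n + 1), F i = ∑ i ∈ simplex n, F (i.1 + 1, i.2.1, i.2.2) := by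
  have hinj : Set.InjOn (fun i : ℕ × ℕ × ℕ => (i.1 + 1, i.2.1, i.2.2)) (simplex n) :=
    fun i _ j _ h => by simp_all [Prod.ext_iff]
  calc ∑ i ∈ simplex (n + 1), F i
      = ∑ i ∈ (simplex n).image fun i => (i.1 + 1, i.2.1, i.2.2), F i := by
        refine (sum_subset ?_ ?_).symm
        · intro i hi
          simp only [mem_image, mem_simplex] at hi ⊢
          obtain ⟨j, hj, rfl⟩ := hi
          dsimp only
          omega
        · rintro ⟨_ | a, b, c⟩ hi hni
          · exact hF b c
          · refine absurd (mem_image.2 ⟨(a, b, c), ?_, rfl⟩) hni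
            rw [mem_simplex] at hi ⊢
            dsimp only at hi ⊢
            omega
    _ = _ := sum_image hinj

section TripleConv

variable {R : Type*} [CommSemiring R]

def tripleConv (n : ℕ) (f g h : ℕ → R) : R := ∑ i ∈ simplex n, f i.1 * g i.2.1 * h i.2.2

def shiftSeq (f : ℕ → R) : ℕ → R
  | 0 => 0
  | j + 1 => f j

lemma tripleConv_comm12 (n : ℕ) (f g h : ℕ → R) : tripleConv n f g h = tripleConv n g f h := by
  refine sum_nbij' (fun i => (i.2.1, i.1, i.2.2)) (fun i => (i.2.1, i.1, i.2.2)) ?_ ?_ ?_ ?_ ?_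
  all_goals intro i hi
  all_goals simp only [mem_simplex] at hi ⊢
  all_goals first | omega | rfl | ring

lemma tripleConv_comm23 (n : ℕ) (f g h : ℕ → R) : tripleConv n f g h = tripleConv n f h g := by
  refine sum_nbij' (fun i => (i.1, i.2.2, i.2.1)) (fun i => (i.1, i.2.2, i.2.1)) ?_ ?_ ?_ ?_ ?_
  all_goals intro i hi
  all_goals simp only [mem_simplex] at hi ⊢
  all_goals first | omega | rfl | ring

lemma tripleConv_shiftSeq_fst (n : ℕ) (f g h : ℕ → R) :
    tripleConv (n + 1) (shiftSeq f) g h = tripleConv n f g h :=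
  sum_simplex_succ n _ fun b c => by simp [shiftSeq]

lemma tripleConv_shiftSeq_fst_eq_snd (n : ℕ) (f g h : ℕ → R) :
    tripleConv n (shiftSeq f) g h = tripleConv n f (shiftSeq g) h := by
  cases n with
  | zero => simp [tripleConv, show simplex 0 = {(0, 0, 0)} by decide, shiftSeq]
  | succ n => rw [tripleConv_comm12 _ f, tripleConv_shiftSeq_fst, tripleConv_shiftSeq_fst,
      tripleConv_comm12]

lemma tripleConv_add_fst (n : ℕ) (f f' g h : ℕ → R) :
    tripleConv n (f + f') g h = tripleConv n f g h + tripleConv n f' g h := by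
  simp only [tripleConv, ← sum_add_distrib, Pi.add_apply, add_mul]

lemma tripleConv_add_snd (n : ℕ) (f g g' h : ℕ → R) :
    tripleConv n f (g + g') h = tripleConv n f g h + tripleConv n f g' h := by
  simp only [tripleConv, ← sum_add_distrib, Pi.add_apply, mul_add, add_mul]

variable [PartialOrder R] [IsOrderedRing R]

lemma tripleConv_mono_fst (n : ℕ) {f f' g h : ℕ → R} (hf : f ≤ f') (hg : 0 ≤ g) (hh : 0 ≤ h) :
    tripleConv n f g h ≤ tripleConv n f' g h :=
  sum_le_sum fun i _ => by gcongr <;> first | exact hg _ | exact hh _ | exact hf _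

lemma tripleConv_mono_snd (n : ℕ) {f g g' h : ℕ → R} (hf : 0 ≤ f) (hg : g ≤ g') (hh : 0 ≤ h) :
    tripleConv n f g h ≤ tripleConv n f g' h := by
  rw [tripleConv_comm12, tripleConv_comm12 n f]
  exact tripleConv_mono_fst n hg hf hh

lemma tripleConv_const_le (n : ℕ) {c : R} (hc : 0 ≤ c) {g h : ℕ → R} (hg : 0 ≤ g) (hh : 0 ≤ h) :
    tripleConv n (fun _ => c) g h ≤ c * (∑ j ∈ range (n + 1), g j) * ∑ j ∈ range (n + 1), h j := by
  have hinj : Set.InjOn (fun i : ℕ × ℕ × ℕ => (i.2.1, i.2.2)) (simplex n) := by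
    rintro ⟨a, b, c⟩ ha ⟨a', b', c'⟩ ha' h
    simp only [mem_coe, mem_simplex, Prod.mk.injEq] at ha ha' h ⊢
    omega
  calc tripleConv n (fun _ => c) g h = c * ∑ p ∈ (simplex n).image fun i => (i.2.1, i.2.2),
        g p.1 * h p.2 := by
        rw [tripleConv, sum_image hinj, mul_sum]
        simp only [mul_assoc]
    _ ≤ c * ∑ p ∈ range (n + 1) ×ˢ range (n + 1), g p.1 * h p.2 := by
        gcongr
        · exact fun p _ _ => mul_nonneg (hg _) (hh _)
        · intro p hp
          simp only [mem_image, mem_simplex, mem_product, mem_range] at hp ⊢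
          obtain ⟨i, hi, rfl⟩ := hp
          omega
    _ = c * (∑ j ∈ range (n + 1), g j) * ∑ j ∈ range (n + 1), h j := by
        rw [mul_assoc, sum_mul_sum, sum_product]

lemma sum_range_shiftSeq_le {f : ℕ → R} (hf : 0 ≤ f) (N : ℕ) :
    ∑ j ∈ range N, shiftSeq f j ≤ ∑ j ∈ range N, f j := by
  cases N with
  | zero => simp
  | succ N =>
    rw [sum_range_succ', sum_range_succ]
    simpa [shiftSeq] using le_add_of_nonneg_right (hf N)

/-- The abstract form of moving one unit of mass from the second sequence to the first. -/
lemma tripleConv_le_of_shiftSeq (n : ℕ) {f f' g g' h : ℕ → R} {c : R}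
    (hf : f + shiftSeq f ≤ f' + fun _ => c) (hg : g' ≤ g + shiftSeq g)
    (hf₀ : 0 ≤ f) (hg₀ : 0 ≤ g) (hh₀ : 0 ≤ h) (hc : 0 ≤ c) :
    tripleConv n f g' h ≤
      tripleConv n f' g h + c * (∑ j ∈ range (n + 1), g j) * ∑ j ∈ range (n + 1), h j :=
  calc tripleConv n f g' h
      ≤ tripleConv n f (g + shiftSeq g) h := tripleConv_mono_snd n hf₀ hg hh₀
    _ = tripleConv n (f + shiftSeq f) g h := by
        rw [tripleConv_add_snd, tripleConv_add_fst, tripleConv_shiftSeq_fst_eq_snd]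
    _ ≤ tripleConv n (f' + fun _ => c) g h := tripleConv_mono_fst n hf hg₀ hh₀
    _ ≤ _ := by
        rw [tripleConv_add_fst]
        exact add_le_add le_rfl (tripleConv_const_le n hc hg₀ hh₀)

end TripleConv

namespace Ring

section Field
variable {K : Type*} [Field K] [CharZero K]

theorem choose_eq_prod_div (x : K) (j : ℕ) :
    choose x j = (∏ k ∈ range j, (x - k)) / j.factorial := by
  rw [choose_eq_smul, ← Polynomial.aeval_eq_smeval, Polynomial.aeval_def, ← Polynomial.eval_map,
    descPochhammer_map, descPochhammer_eval_eq_prod_range, smul_eq_mul, inv_mul_eq_div]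

theorem choose_succ_eq_mul_div (x : K) (j : ℕ) :
    choose x (j + 1) = choose x j * (x - j) / (j + 1) := by
  rw [choose_eq_prod_div, choose_eq_prod_div, prod_range_succ, Nat.factorial_succ]
  push_cast
  field_simp

theorem choose_succ_eq_div_mul_choose_sub_one (x : K) (j : ℕ) :
    choose x (j + 1) = x / (j + 1) * choose (x - 1) j := by
  rw [choose_eq_prod_div, choose_eq_prod_div, prod_range_succ', Nat.factorial_succ]
  push_cast
  simp only [sub_sub, add_comm (1 : K), sub_zero]
  field_simp

end Field

section OrderedField
variable {K : Type*} [Field K] [LinearOrder K] [IsStrictOrderedRing K] {x y : K} {j : ℕ}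

theorem choose_nonneg_of_le (hj : (j : K) ≤ x + 1) : 0 ≤ choose x j := by
  rw [choose_eq_prod_div]
  refine div_nonneg (prod_nonneg fun k hk => ?_) (Nat.cast_nonneg _)
  have : (k : K) + 1 ≤ j := by exact_mod_cast mem_range.1 hk
  linarith

theorem choose_le_choose_of_le (hj : (j : K) ≤ x + 1) (hxy : x ≤ y) :
    choose x j ≤ choose y j := by
  rw [choose_eq_prod_div, choose_eq_prod_div]
  gcongr with k hk
  · intro k hk
    have : (k : K) + 1 ≤ j := by exact_mod_cast mem_range.1 hk
    linarith

theorem abs_choose_succ_le (hx : 0 ≤ x) (hxj : x ≤ j) :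
    |choose x (j + 1)| ≤ |choose x j| := by
  rw [choose_succ_eq_mul_div, abs_div, abs_mul, abs_of_nonpos (sub_nonpos.2 hxj),
    abs_of_pos (by positivity : (0 : K) < j + 1), div_le_iff₀ (by positivity)]
  exact mul_le_mul_of_nonneg_left (by linarith) (abs_nonneg _)

theorem abs_choose_le_inv (hx : 0 ≤ x) (hj : x + 1 < j) : |choose x j| ≤ (x + 1)⁻¹ := by
  induction j with
  | zero => exact absurd hj (by push_cast; linarith)
  | succ j ih =>
    push_cast at hj
    rcases lt_or_ge (x + 1) j with hxj | hxj
    · exact (abs_choose_succ_le hx (by linarith)).trans (ih hxj)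
    · -- `j - 1 ≤ x < j`, so `0 ≤ choose x j ≤ choose j j = 1` and `|x - j| ≤ 1`
      have h0 : 0 ≤ choose x j := choose_nonneg_of_le hxj
      have h1 : choose x j ≤ 1 := by
        simpa [choose_natCast] using choose_le_choose_of_le hxj (by linarith : x ≤ j)
      rw [choose_succ_eq_mul_div, abs_div, abs_mul, abs_of_nonneg h0, abs_of_nonpos (by linarith),
        abs_of_pos (by positivity : (0 : K) < j + 1)]
      calc choose x j * -(x - j) / (j + 1) ≤ 1 * 1 / (j + 1) := by
            gcongr <;> linarith
        _ ≤ (x + 1)⁻¹ := by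
            rw [one_mul, one_div]
            gcongr

theorem abs_choose_succ_eq_sub (hx₀ : 0 ≤ x) (hx₁ : x ≤ 1) (j : ℕ) :
    |choose x (j + 1)| = |choose (x - 1) j| - |choose (x - 1) (j + 1)| := by
  have hj : (0 : K) < j + 1 := by positivity
  rw [choose_succ_eq_div_mul_choose_sub_one, choose_succ_eq_mul_div (x - 1), abs_mul, abs_div,
    abs_div, abs_mul, abs_of_nonneg hx₀, abs_of_pos hj, abs_of_nonpos (by linarith : x - 1 - j ≤ 0)]
  field_simp
  ring

theorem sum_range_abs_choose_le_two (hx₀ : 0 ≤ x) (hx₁ : x ≤ 1) (N : ℕ) :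
    ∑ j ∈ range N, |choose x j| ≤ 2 := by
  cases N with
  | zero => simp
  | succ N =>
    rw [sum_range_succ', sum_congr rfl fun j _ => abs_choose_succ_eq_sub hx₀ hx₁ j,
      sum_range_sub']
    simp only [choose_zero_right, abs_one]
    linarith [abs_nonneg (choose (x - 1) N)]

theorem abs_choose_add_one_le (x : K) :
    (fun j => |choose (x + 1) j|) ≤ (fun j => |choose x j|) + shiftSeq fun j => |choose x j|
  | 0 => by simp [shiftSeq]
  | j + 1 => by
    simpa [shiftSeq, choose_succ_succ, add_comm] using abs_add_le (choose x j) (choose x (j + 1))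

theorem sum_range_abs_choose_le_two_pow {p : ℕ} (hx : 0 ≤ x) (hxp : x ≤ p + 1) (N : ℕ) :
    ∑ j ∈ range N, |choose x j| ≤ 2 ^ (p + 1) := by
  induction p generalizing x with
  | zero => simpa using sum_range_abs_choose_le_two hx (by simpa using hxp) N
  | succ p ih =>
    rcases le_or_gt x 1 with hx₁ | hx₁
    · calc _ ≤ (2 : K) := sum_range_abs_choose_le_two hx hx₁ N
        _ ≤ 2 ^ (p + 2) := le_self_pow₀ one_le_two (by omega)
    · have hsum := ih (x := x - 1) (by linarith) (by push_cast at hxp ⊢; linarith)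
      calc ∑ j ∈ range N, |choose x j|
          ≤ ∑ j ∈ range N, (|choose (x - 1) j| + shiftSeq (fun j => |choose (x - 1) j|) j) :=
            sum_le_sum fun j _ => by simpa using abs_choose_add_one_le (x - 1) j
        _ ≤ 2 * 2 ^ (p + 1) := by
            rw [sum_add_distrib, two_mul]
            exact add_le_add hsum
              ((sum_range_shiftSeq_le (fun _ => abs_nonneg _) N).trans hsum)
        _ = 2 ^ (p + 2) := by ring

theorem abs_choose_add_shiftSeq_le (hx : 0 ≤ x) :
    (fun j => |choose x j|) + shiftSeq (fun j => |choose x j|) ≤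
      (fun j => |choose (x + 1) j|) + fun _ => 2 * (x + 1)⁻¹
  | 0 => by
    simp only [Pi.add_apply, shiftSeq, choose_zero_right, abs_one, add_zero]
    exact le_add_of_nonneg_right (by positivity)
  | j + 1 => by
    simp only [Pi.add_apply, shiftSeq, choose_succ_succ]
    rcases le_or_gt ((j + 1 : ℕ) : K) (x + 1) with hj | hj
    · have h₀ : 0 ≤ choose x j := choose_nonneg_of_le (by push_cast at hj; linarith)
      have h₁ : 0 ≤ choose x (j + 1) := choose_nonneg_of_le hj
      rw [abs_of_nonneg h₀, abs_of_nonneg h₁, abs_of_nonneg (add_nonneg h₀ h₁)]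
      linarith [inv_pos.2 (by linarith : 0 < x + 1)]
    · have hsmall := abs_choose_le_inv hx hj
      have htri : |choose x j| ≤ |choose x j + choose x (j + 1)| + |choose x (j + 1)| := by
        simpa using abs_sub (choose x j + choose x (j + 1)) (choose x (j + 1))
      linarith

end OrderedField

end Ring

theorem Real.Gamma_div_factorial_mul_Gamma_eq_choose {x : ℝ} (hx : -1 < x) (i : ℕ) :
    Real.Gamma (x + 1) / (i.factorial * Real.Gamma (x - i + 1)) = Ring.choose x i := by
  induction i with
  | zero =>
    have : Real.Gamma (x + 1) ≠ 0 := (Real.Gamma_pos_of_pos (by linarith)).ne'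
    simp [this]
  | succ i ih =>
    rw [Ring.choose_succ_eq_mul_div, ← ih, Nat.factorial_succ, Nat.cast_mul, Nat.cast_succ,
      show x - (i + 1) + 1 = x - i by ring]
    rcases eq_or_ne (x - i) 0 with hxi | hxi
    · simp [hxi]
    rw [Real.Gamma_add_one hxi]
    rcases eq_or_ne (Real.Gamma (x - i)) 0 with hΓ | hΓ
    · simp [hΓ]
    field_simp

/-- `Leb n (y / n, z / n, w / n)` for `y, z, w > -1`, see `Leb_div_eq_scaledLeb`. -/
noncomputable def scaledLeb (n : ℕ) (y z w : ℝ) : ℝ :=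
  tripleConv n (|Ring.choose y ·|) (|Ring.choose z ·|) (|Ring.choose w ·|)

theorem Leb_div_eq_scaledLeb {n : ℕ} (hn : n ≠ 0) {y z w : ℝ} (hy : -1 < y) (hz : -1 < z)
    (hw : -1 < w) : Leb n (y / n, z / n, w / n) = scaledLeb n y z w := by
  have hn' : (n : ℝ) ≠ 0 := Nat.cast_ne_zero.2 hn
  refine sum_congr rfl fun i _ => ?_
  simp only [lagPoly, mul_div_cancel₀ _ hn', Real.Gamma_div_factorial_mul_Gamma_eq_choose hy,
    Real.Gamma_div_factorial_mul_Gamma_eq_choose hz,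
    Real.Gamma_div_factorial_mul_Gamma_eq_choose hw, abs_mul]

theorem scaledLeb_comm23 (n : ℕ) (y z w : ℝ) : scaledLeb n y z w = scaledLeb n y w z :=
  tripleConv_comm23 n _ _ _

theorem scaledLeb_le_add_one_sub_one (n : ℕ) {p q : ℕ} {y z w : ℝ} (hy : 0 ≤ y) (hz : 1 ≤ z)
    (hzq : z ≤ q + 2) (hw : 0 ≤ w) (hwp : w ≤ p + 1) :
    scaledLeb n y z w ≤ scaledLeb n (y + 1) (z - 1) w + 2 ^ (q + p + 3) / (y + 1) := by
  have hz' : (fun j => |Ring.choose z j|) ≤ (fun j => |Ring.choose (z - 1) j|) +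
      shiftSeq fun j => |Ring.choose (z - 1) j| := by
    simpa using Ring.abs_choose_add_one_le (z - 1)
  refine (tripleConv_le_of_shiftSeq n (Ring.abs_choose_add_shiftSeq_le hy) hz'
    (fun _ => abs_nonneg _) (fun _ => abs_nonneg _) (fun _ => abs_nonneg _) (by positivity)).trans
    (add_le_add le_rfl ?_)
  calc 2 * (y + 1)⁻¹ * (∑ j ∈ range (n + 1), |Ring.choose (z - 1) j|) *
        ∑ j ∈ range (n + 1), |Ring.choose w j|
      ≤ 2 * (y + 1)⁻¹ * 2 ^ (q + 1) * 2 ^ (p + 1) := by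
        gcongr
        · exact Ring.sum_range_abs_choose_le_two_pow (by linarith) (by linarith) _
        · exact Ring.sum_range_abs_choose_le_two_pow hw hwp _
    _ = 2 ^ (q + p + 3) / (y + 1) := by ring

theorem scaledLeb_le_add_nat (n : ℕ) {p : ℕ} {y α w : ℝ} (hy : 0 ≤ y) (hα : 0 ≤ α) (hα₁ : α ≤ 1)
    (hw : 0 ≤ w) (hwp : w ≤ p + 1) (r : ℕ) :
    scaledLeb n y (r + α) w ≤ scaledLeb n (y + r) α w + 2 ^ (r + p + 3) / (y + 1) := by
  induction r generalizing y with
  | zero =>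
    simp only [Nat.cast_zero, zero_add, add_zero]
    exact le_add_of_nonneg_right (by positivity)
  | succ r ih =>
    have hstep := scaledLeb_le_add_one_sub_one n (q := r) (z := (r + 1 : ℕ) + α) hy
      (by push_cast; linarith [(Nat.cast_nonneg r : (0 : ℝ) ≤ r)]) (by push_cast; linarith) hw hwp
    have hrest := ih (y := y + 1) (by linarith)
    rw [show ((r + 1 : ℕ) : ℝ) + α - 1 = r + α by push_cast; ring] at hstep
    rw [show y + 1 + r = y + (r + 1 : ℕ) by push_cast; ring] at hrest
    have hle : (2 : ℝ) ^ (r + p + 3) / (y + 1 + 1) ≤ 2 ^ (r + p + 3) / (y + 1) := by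
      gcongr; linarith
    calc scaledLeb n y ((r + 1 : ℕ) + α) w
        ≤ scaledLeb n (y + (r + 1 : ℕ)) α w +
            (2 ^ (r + p + 3) / (y + 1) + 2 ^ (r + p + 3) / (y + 1)) := by
          linarith
      _ = scaledLeb n (y + (r + 1 : ℕ)) α w + 2 ^ (r + 1 + p + 3) / (y + 1) := by ring

theorem scaledLeb_le_corner (n r₂ r₃ : ℕ) {y α₂ α₃ : ℝ} (hy : 0 ≤ y) (hα₂ : 0 ≤ α₂)
    (hα₂' : α₂ ≤ 1) (hα₃ : 0 ≤ α₃) (hα₃' : α₃ ≤ 1) :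
    scaledLeb n y (r₂ + α₂) (r₃ + α₃) ≤
      scaledLeb n (y + r₂ + r₃) α₂ α₃ + 2 ^ (r₂ + r₃ + 4) / (y + 1) := by
  have h₂ := scaledLeb_le_add_nat n hy hα₂ hα₂' (by positivity)
    (by linarith : (r₃ : ℝ) + α₃ ≤ r₃ + 1) r₂
  have h₃ := scaledLeb_le_add_nat n (p := 0) (by positivity : 0 ≤ y + r₂) hα₃ hα₃' hα₂
    (by simpa using hα₂') r₃
  rw [scaledLeb_comm23 n (y + r₂), scaledLeb_comm23 n (y + r₂ + r₃)] at h₃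
  have hle : (2 : ℝ) ^ (r₃ + 0 + 3) / (y + r₂ + 1) ≤ 2 ^ (r₂ + r₃ + 3) / (y + 1) :=
    div_le_div₀ (by positivity) (pow_le_pow_right₀ one_le_two (by omega)) (by positivity)
      (by linarith [(Nat.cast_nonneg r₂ : (0 : ℝ) ≤ r₂)])
  calc scaledLeb n y (r₂ + α₂) (r₃ + α₃)
      ≤ scaledLeb n (y + r₂ + r₃) α₂ α₃ +
          (2 ^ (r₂ + r₃ + 3) / (y + 1) + 2 ^ (r₂ + r₃ + 3) / (y + 1)) := by
        linarith
    _ = _ := by ring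

theorem two_pow_add_four_div_le {n k : ℕ} (hn : 2 ≤ n) (hk : (k : ℝ) ≤ 2 * n / 3) {y : ℝ}
    (hy : n / 3 ≤ y) :
    2 ^ (k + 4) / (y + 1) ≤ (2 : ℝ) ^ (2 * (n : ℝ) / 3) * (10 + 2 * Real.log n) := by
  have hn' : (2 : ℝ) ≤ n := by exact_mod_cast hn
  have hpow : (2 : ℝ) ^ k ≤ 2 ^ (2 * (n : ℝ) / 3) := by
    rw [← Real.rpow_natCast]
    exact Real.rpow_le_rpow_of_exponent_le one_le_two hk
  have hlog : 0 ≤ Real.log n := Real.log_nonneg (by linarith)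
  have hy₁ : 0 < y + 1 := by linarith
  have hfrac : 16 / (y + 1) ≤ 10 := by
    rw [div_le_iff₀ hy₁]
    linarith
  calc 2 ^ (k + 4) / (y + 1) = 2 ^ k * (16 / (y + 1)) := by ring
    _ ≤ 2 ^ (2 * (n : ℝ) / 3) * (10 + 2 * Real.log n) :=
        mul_le_mul hpow (by linarith) (by positivity) (by positivity)

theorem reduction_to_corner_general (n : ℕ) (hn : 4 ≤ n) (r₁ r₂ r₃ : ℕ)
    (hr : r₁ + r₂ + r₃ = n - 1) (α₁ α₂ α₃ : ℝ)
    (hα₂ : 0 ≤ α₂) (hα₂' : α₂ < 1) (hα₃ : 0 ≤ α₃) (hα₃' : α₃ < 1)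
    (hs : α₁ + α₂ + α₃ = 1)
    (h12 : (r₁:ℝ) + α₁ ≥ (r₂:ℝ) + α₂) (h13 : (r₁:ℝ) + α₁ ≥ (r₃:ℝ) + α₃) :
    Leb n (((r₁:ℝ) + α₁)/n, ((r₂:ℝ) + α₂)/n, ((r₃:ℝ) + α₃)/n) ≤
      Leb n (((n:ℝ) - 1 + α₁)/n, α₂/n, α₃/n)
        + (2:ℝ) ^ (2*(n:ℝ)/3) * (10 + 2 * Real.log n) := by
  have hsum : (r₁ : ℝ) + r₂ + r₃ + 1 = n := by
    rw [← Nat.cast_add, ← Nat.cast_add, hr]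
    push_cast [Nat.cast_sub (by omega : 1 ≤ n)]
    ring
  have hy : (n : ℝ) / 3 ≤ r₁ + α₁ := by linarith
  have hn3 : (0 : ℝ) ≤ n / 3 := by positivity
  have hr₂ : (0 : ℝ) ≤ r₂ := Nat.cast_nonneg r₂
  have hr₃ : (0 : ℝ) ≤ r₃ := Nat.cast_nonneg r₃
  have hcorner : (n : ℝ) - 1 + α₁ = r₁ + α₁ + r₂ + r₃ := by linarith
  rw [Leb_div_eq_scaledLeb (by omega) (by linarith) (by linarith) (by linarith),
    Leb_div_eq_scaledLeb (by omega) (by linarith) (by linarith) (by linarith), hcorner]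
  refine (scaledLeb_le_corner n r₂ r₃ (by linarith) hα₂ hα₂'.le hα₃ hα₃'.le).trans
    (add_le_add le_rfl (two_pow_add_four_div_le (by omega) ?_ hy))
  push_cast
  linarith

theorem reduction_to_corner (n : ℕ) (hn : 4 ≤ n) (r₁ r₂ r₃ : ℕ)
    (hr : r₁ + r₂ + r₃ = n - 1) (α₁ α₂ α₃ : ℝ)
    (hα₁ : -1 < α₁) (hα₁' : α₁ < 1)
    (hα₂ : 0 ≤ α₂) (hα₂' : α₂ < 1) (hα₃ : 0 ≤ α₃) (hα₃' : α₃ < 1)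
    (hs : α₁ + α₂ + α₃ = 1)
    (h12 : (r₁:ℝ) + α₁ ≥ (r₂:ℝ) + α₂) (h13 : (r₁:ℝ) + α₁ ≥ (r₃:ℝ) + α₃) :
    Leb n (((r₁:ℝ) + α₁)/n, ((r₂:ℝ) + α₂)/n, ((r₃:ℝ) + α₃)/n) ≤
      Leb n (((n:ℝ) - 1 + α₁)/n, α₂/n, α₃/n)
        + (2:ℝ) ^ (2*(n:ℝ)/3) * (10 + 2 * Real.log n) :=
  reduction_to_corner_general n hn r₁ r₂ r₃ hr α₁ α₂ α₃ hα₂ hα₂' hα₃ hα₃' hs h12 h13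
end

section
/- Let p ∈ ℕ and let m, x, y be real numbers with y > 0, x > p, m > p + 1 and m − y > p + 1. Then Σ_{κ=0}^{p+1} C(x+1, κ)/(y·C(m−κ, y)) − Σ_{κ=0}^{p} C(x, κ)/((y+1)·C(m−κ, y+1)) = Σ_{κ=0}^{p} 2·C(x, κ)/(y·C(m−κ, y)) + C(x, p+1)/(y·C(m−p−1, y)). -/
open Finset

/-!
Pascal's rule `C(x+1, κ+1) = C(x, κ) + C(x, κ+1)` and the Beta-function recurrence
`B(y, b) = B(y, b+1) + B(y+1, b)`, read through `1 / (y · C(a, y)) = B(y, a - y + 1)`, combine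
into: the `(κ+1)`-st term of the first sum minus the `κ`-th term of the second is
`f κ + f (κ+1)`, where `f κ = C(x, κ) / (y · C(m - κ, y))`.
Summing over `κ ≤ p`, the right-hand sides telescope into `2 Σ_{κ ≤ p} f κ + f (p+1) - f 0`,
and the leftover `κ = 0` term of the first sum is `f 0` since `C(x+1, 0) = C(x, 0) = 1`.
-/

/-- Generalized binomial coefficient `C(a,b) = Γ(a+1)/(Γ(b+1)·Γ(a−b+1))`. -/
noncomputable def genBinom (a b : ℝ) : ℝ :=
  Real.Gamma (a + 1) / (Real.Gamma (b + 1) * Real.Gamma (a - b + 1))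

lemma genBinom_zero_right {a : ℝ} (ha : 0 < a + 1) : genBinom a 0 = 1 := by
  rw [genBinom, zero_add, Real.Gamma_one, one_mul, sub_zero,
    div_self (Real.Gamma_pos_of_pos ha).ne']

lemma genBinom_add_one_add_one {x k : ℝ} (hk : 0 < k + 1) (hxk : 0 < x - k) :
    genBinom (x + 1) (k + 1) = genBinom x k + genBinom x (k + 1) := by
  have hx : Real.Gamma (x + 1) ≠ 0 := (Real.Gamma_pos_of_pos (by linarith)).ne'
  have hk' : Real.Gamma (k + 1) ≠ 0 := (Real.Gamma_pos_of_pos hk).ne'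
  have hxk' : Real.Gamma (x - k) ≠ 0 := (Real.Gamma_pos_of_pos hxk).ne'
  simp only [genBinom]
  rw [show x + 1 - (k + 1) + 1 = x - k + 1 by ring, show x - (k + 1) + 1 = x - k by ring,
    Real.Gamma_add_one (by linarith : x + 1 ≠ 0), Real.Gamma_add_one (by linarith : k + 1 ≠ 0),
    Real.Gamma_add_one hxk.ne']
  field_simp
  ring

lemma inv_mul_genBinom_sub_one {a y : ℝ} (hy : 0 < y) (hay : 0 < a - y) :
    (y * genBinom (a - 1) y)⁻¹ = (y * genBinom a y)⁻¹ + ((y + 1) * genBinom a (y + 1))⁻¹ := by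
  have ha : Real.Gamma a ≠ 0 := (Real.Gamma_pos_of_pos (by linarith)).ne'
  have hy' : Real.Gamma (y + 1) ≠ 0 := (Real.Gamma_pos_of_pos (by linarith)).ne'
  have hay' : Real.Gamma (a - y) ≠ 0 := (Real.Gamma_pos_of_pos hay).ne'
  simp only [genBinom]
  rw [show a - 1 + 1 = a by ring, show a - 1 - y + 1 = a - y by ring,
    show a - (y + 1) + 1 = a - y by ring, Real.Gamma_add_one (by linarith : a ≠ 0),
    Real.Gamma_add_one (by linarith : y + 1 ≠ 0), Real.Gamma_add_one hay.ne']
  have : a ≠ 0 := by linarith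
  have : y + 1 ≠ 0 := by linarith
  field_simp
  ring

lemma genBinom_add_one_div_sub_genBinom_div {x y m k : ℝ} (hy : 0 < y) (hk : 0 < k + 1)
    (hxk : 0 < x - k) (hmky : 0 < m - k - y) :
    genBinom (x + 1) (k + 1) / (y * genBinom (m - (k + 1)) y)
        - genBinom x k / ((y + 1) * genBinom (m - k) (y + 1))
      = genBinom x k / (y * genBinom (m - k) y)
        + genBinom x (k + 1) / (y * genBinom (m - (k + 1)) y) := by
  have hrecip := inv_mul_genBinom_sub_one (a := m - k) hy (by linarith)
  rw [show m - k - 1 = m - (k + 1) by ring] at hrecip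
  simp only [div_eq_mul_inv, genBinom_add_one_add_one hk hxk, hrecip]
  ring

theorem sum_identity_Dstar_general (p : ℕ) (m x y : ℝ) (hy : 0 < y) (hx : (p:ℝ) < x)
    (hmy : (p:ℝ) + 1 < m - y) :
    ∑ κ ∈ Finset.range (p + 2), genBinom (x + 1) κ / (y * genBinom (m - κ) y)
      - ∑ κ ∈ Finset.range (p + 1), genBinom x κ / ((y + 1) * genBinom (m - κ) (y + 1))
    = ∑ κ ∈ Finset.range (p + 1), 2 * genBinom x κ / (y * genBinom (m - κ) y)
      + genBinom x (p + 1) / (y * genBinom (m - (p:ℝ) - 1) y) := by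
  set f : ℕ → ℝ := fun κ => genBinom x κ / (y * genBinom (m - κ) y)
  have hstep : ∀ κ ∈ range (p + 1),
      genBinom (x + 1) ↑(κ + 1) / (y * genBinom (m - ↑(κ + 1)) y)
        - genBinom x κ / ((y + 1) * genBinom (m - κ) (y + 1)) = f κ + f (κ + 1) := by
    intro κ hκ
    have hκp : (κ : ℝ) ≤ p := by exact_mod_cast Nat.lt_succ_iff.mp (mem_range.mp hκ)
    simp only [f, Nat.cast_add_one]
    exact genBinom_add_one_div_sub_genBinom_div hy (by positivity) (by linarith) (by linarith)
  have hfirst : genBinom (x + 1) ↑(0 : ℕ) / (y * genBinom (m - ↑(0 : ℕ)) y) = f 0 := by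
    simp only [f, Nat.cast_zero, genBinom_zero_right (by linarith : 0 < x + 1 + 1),
      genBinom_zero_right (by linarith : 0 < x + 1)]
  have hlast : f (p + 1) = genBinom x (p + 1) / (y * genBinom (m - (p:ℝ) - 1) y) := by
    simp only [f, Nat.cast_add_one, sub_add_eq_sub_sub]
  have hdouble : ∑ κ ∈ range (p + 1), 2 * genBinom x κ / (y * genBinom (m - κ) y)
      = 2 * ∑ κ ∈ range (p + 1), f κ := by
    simp only [f, mul_sum, mul_div_assoc]
  calc _ = f 0 + ∑ κ ∈ range (p + 1), (f κ + f (κ + 1)) := by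
        rw [sum_range_succ', hfirst, add_sub_right_comm, ← sum_sub_distrib, sum_congr rfl hstep,
          add_comm]
    _ = 2 * ∑ κ ∈ range (p + 1), f κ + f (p + 1) := by
        rw [sum_add_distrib]
        linear_combination sum_range_succ f (p + 1) - sum_range_succ' f (p + 1)
    _ = _ := by rw [hdouble, hlast]

theorem sum_identity_Dstar (p : ℕ) (m x y : ℝ) (hy : 0 < y) (hx : (p:ℝ) < x)
    (hm : (p:ℝ) + 1 < m) (hmy : (p:ℝ) + 1 < m - y) :
    ∑ κ ∈ Finset.range (p + 2), genBinom (x + 1) κ / (y * genBinom (m - κ) y)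
      - ∑ κ ∈ Finset.range (p + 1), genBinom x κ / ((y + 1) * genBinom (m - κ) (y + 1))
    = ∑ κ ∈ Finset.range (p + 1), 2 * genBinom x κ / (y * genBinom (m - κ) y)
      + genBinom x (p + 1) / (y * genBinom (m - (p:ℝ) - 1) y) :=
  sum_identity_Dstar_general p m x y hy hx hmy
end

section
/- Let m, q, r ∈ ℕ with q + r ≤ m, and let x, y be real numbers with 0 < x < r + 1 and 0 < y < q + 1. Then Σ_{κ=q}^{m−1−r} 1/((x+1)·C(m−κ, x+1)·y·C(κ, y)) − Σ_{κ=q+1}^{m−r} 1/(x·C(m−κ, x)·(y+1)·C(κ, y+1)) = 1/(x·C(r, x)·y·C(m−r, y)) − 1/(x·C(m−q, x)·y·C(q, y)). -/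
open Finset

theorem genBinom_pos {a b : ℝ} (hb : 0 ≤ b) (hba : b < a + 1) : 0 < genBinom a b := by
  unfold genBinom
  have := Real.Gamma_pos_of_pos (by linarith : 0 < a + 1)
  have := Real.Gamma_pos_of_pos (by linarith : 0 < b + 1)
  have := Real.Gamma_pos_of_pos (by linarith : 0 < a - b + 1)
  positivity

-- No hypotheses: at the poles both sides vanish, since Mathlib's `Γ` is `0` there.
theorem genBinom_succ_right_eq (a b : ℝ) :
    genBinom a (b + 1) * (b + 1) = genBinom a b * (a - b) := by
  unfold genBinom
  rcases eq_or_ne (b + 1) 0 with hb | hb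
  · simp [hb, show a - b = a + 1 by linarith]
  rcases eq_or_ne (a - b) 0 with hab | hab
  · simp [hab, show a - (b + 1) + 1 = 0 by linarith]
  rw [show a - (b + 1) + 1 = a - b by ring, Real.Gamma_add_one hb, Real.Gamma_add_one hab,
    div_mul_eq_mul_div, div_mul_eq_mul_div, mul_comm (Real.Gamma (a + 1)),
    mul_comm (Real.Gamma (a + 1)), mul_assoc (b + 1), mul_div_mul_left _ _ hb,
    mul_left_comm (Real.Gamma (b + 1)), mul_div_mul_left _ _ hab]

theorem genBinom_mul_succ_eq {a : ℝ} (ha : a + 1 ≠ 0) (b : ℝ) :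
    genBinom a b * (a + 1) = genBinom (a + 1) b * (a + 1 - b) := by
  unfold genBinom
  rcases eq_or_ne (a - b + 1) 0 with hab | hab
  · simp [hab, show a + 1 - b = 0 by linarith]
  rw [Real.Gamma_add_one ha, show a + 1 - b + 1 = (a - b + 1) + 1 by ring,
    Real.Gamma_add_one hab]
  field_simp
  ring_nf

noncomputable def recipBinomProd (x y a b : ℝ) : ℝ :=
  1 / (x * genBinom a x * (y * genBinom b y))

theorem recipBinomProd_step {x y a b : ℝ} (hx0 : 0 < x) (hxa : x < a) (hy0 : 0 < y)
    (hyb : y < b + 1) :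
    recipBinomProd (x + 1) y a b - recipBinomProd x (y + 1) (a - 1) (b + 1)
      = recipBinomProd x y (a - 1) (b + 1) - recipBinomProd x y a b := by
  have hP := genBinom_pos hx0.le (by linarith : x < a - 1 + 1)
  have hQ := genBinom_pos hy0.le hyb
  have hA : genBinom a x = genBinom (a - 1) x * a / (a - x) := by
    refine eq_div_of_mul_eq (by linarith) ?_
    simpa using (genBinom_mul_succ_eq (a := a - 1) (by linarith) x).symm
  have hB : genBinom (b + 1) y = genBinom b y * (b + 1) / (b + 1 - y) :=
    eq_div_of_mul_eq (by linarith) (genBinom_mul_succ_eq (by linarith) y).symm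
  have hA' : genBinom a (x + 1) = genBinom a x * (a - x) / (x + 1) :=
    eq_div_of_mul_eq (by linarith) (genBinom_succ_right_eq a x)
  have hB' : genBinom (b + 1) (y + 1) = genBinom (b + 1) y * (b + 1 - y) / (y + 1) := by
    refine eq_div_of_mul_eq (by linarith) ?_
    simpa using genBinom_succ_right_eq (b + 1) y
  unfold recipBinomProd
  rw [hA', hB', hA, hB]
  have : 0 < a := by linarith
  have : 0 < a - x := by linarith
  have : 0 < b + 1 - y := by linarith
  have : 0 < b + 1 := by linarith
  field_simp
  ring

theorem sum_Ico_sub_sum_Icc_succ_eq {M : Type*} [AddCommGroup M] (G H F : ℕ → M) {q n : ℕ}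
    (hqn : q ≤ n) (h : ∀ κ ∈ Ico q n, G κ - H (κ + 1) = F (κ + 1) - F κ) :
    ∑ κ ∈ Ico q n, G κ - ∑ κ ∈ Icc (q + 1) n, H κ = F n - F q := by
  rw [← Ico_add_one_right_eq_Icc, ← sum_Ico_add', ← sum_sub_distrib, sum_congr rfl h,
    sum_Ico_sub F hqn]

theorem sum_identity_Dstarstar (m q r : ℕ) (hqr : q + r ≤ m) (x y : ℝ)
    (hx0 : 0 < x) (hx : x < (r:ℝ) + 1) (hy0 : 0 < y) (hy : y < (q:ℝ) + 1) :
    ∑ κ ∈ Finset.Ico q (m - r),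
        1 / ((x + 1) * genBinom ((m:ℝ) - κ) (x + 1) * (y * genBinom κ y))
      - ∑ κ ∈ Finset.Icc (q + 1) (m - r),
        1 / (x * genBinom ((m:ℝ) - κ) x * ((y + 1) * genBinom κ (y + 1)))
    = 1 / (x * genBinom r x * (y * genBinom ((m:ℝ) - r) y))
      - 1 / (x * genBinom ((m:ℝ) - q) x * (y * genBinom q y)) := by
  have hstep : ∀ κ ∈ Ico q (m - r),
      recipBinomProd (x + 1) y (m - κ) κ - recipBinomProd x (y + 1) (m - (κ + 1 : ℕ)) (κ + 1 : ℕ)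
        = recipBinomProd x y (m - (κ + 1 : ℕ)) (κ + 1 : ℕ) - recipBinomProd x y (m - κ) κ := by
    intro κ hκ
    rw [mem_Ico] at hκ
    have hκr : (κ : ℝ) + r + 1 ≤ m := by exact_mod_cast (by omega : κ + r + 1 ≤ m)
    have hqκ : (q : ℝ) ≤ κ := by exact_mod_cast hκ.1
    rw [Nat.cast_succ, show (m : ℝ) - (κ + 1) = m - κ - 1 by ring]
    exact recipBinomProd_step hx0 (by linarith) hy0 (by linarith)
  have := sum_Ico_sub_sum_Icc_succ_eq (fun κ : ℕ ↦ recipBinomProd (x + 1) y (m - κ) κ)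
    (fun κ : ℕ ↦ recipBinomProd x (y + 1) (m - κ) κ) (fun κ : ℕ ↦ recipBinomProd x y (m - κ) κ)
    (by omega : q ≤ m - r) hstep
  rwa [Nat.cast_sub (by omega : r ≤ m), sub_sub_cancel] at this
end

section
/- Let a, b be real numbers and let g(α) = Γ(a+α)/Γ(b+α), where Γ is the real Gamma function. If a ≥ b, then g is nondecreasing on the interval {α : b + α > 0}; if b ≥ a, then g is nonincreasing on the interval {α : a + α > 0}. -/
/-!
`log ∘ Γ` is convex on `(0, ∞)`, and the increments `φ (x + d) - φ x` of a convex function `φ`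
with a fixed step `d ≥ 0` grow with `x`. Taking `d = a - b` and `x = b + α`, the logarithm
`log Γ(a + α) - log Γ(b + α)` of the ratio is nondecreasing in `α` when `a ≥ b`; the case `b ≥ a`
is the same statement for the reciprocal ratio.
-/

open Real Set

section Increment

variable {𝕜 : Type*} [Field 𝕜] [LinearOrder 𝕜] [IsStrictOrderedRing 𝕜] {s : Set 𝕜} {f : 𝕜 → 𝕜}

theorem ConvexOn.map_add_sub_le_map_add_sub (hf : ConvexOn 𝕜 s f) {x y d : 𝕜} (hx : x ∈ s)
    (hyd : y + d ∈ s) (hxy : x ≤ y) (hd : 0 ≤ d) : f (x + d) - f x ≤ f (y + d) - f y := by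
  rcases hd.eq_or_lt with rfl | hd
  · simp
  have hsub : Icc x (y + d) ⊆ s := hf.1.ordConnected.out hx hyd
  have hxd : x + d ∈ s := hsub ⟨by linarith, by linarith⟩
  have hy : y ∈ s := hsub ⟨hxy, by linarith⟩
  have hslope : slope f x (x + d) ≤ slope f y (y + d) := calc
    slope f x (x + d) ≤ slope f x (y + d) :=
      hf.slope_mono hx ⟨hxd, by simp [hd.ne']⟩ ⟨hyd, by simp; linarith⟩ (by linarith)
    _ = slope f (y + d) x := slope_comm f _ _
    _ ≤ slope f (y + d) y :=
      hf.slope_mono hyd ⟨hx, by simp; linarith⟩ ⟨hy, by simp [hd.ne']⟩ hxy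
    _ = slope f y (y + d) := slope_comm f _ _
  simpa [slope_def_field, div_le_div_iff_of_pos_right hd] using hslope

end Increment

namespace Real

theorem monotoneOn_log_Gamma_add_sub_log_Gamma_add {a b : ℝ} (hab : b ≤ a) :
    MonotoneOn (fun α ↦ log (Gamma (a + α)) - log (Gamma (b + α))) {α | 0 < b + α} := by
  intro α (hα : 0 < b + α) β _ hαβ
  have h := convexOn_log_Gamma.map_add_sub_le_map_add_sub (d := a - b) (mem_Ioi.2 hα)
    (mem_Ioi.2 (show 0 < b + β + (a - b) by linarith)) (add_le_add_right hαβ b) (sub_nonneg.2 hab)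
  have hshift : ∀ γ, b + γ + (a - b) = a + γ := fun γ ↦ by ring
  simpa only [Function.comp_apply, hshift] using h

theorem Gamma_div_Gamma_eq_exp {x y : ℝ} (hx : 0 < x) (hy : 0 < y) :
    Gamma x / Gamma y = exp (log (Gamma x) - log (Gamma y)) := by
  rw [exp_sub, exp_log (Gamma_pos_of_pos hx), exp_log (Gamma_pos_of_pos hy)]

end Real

/-- Monotonicity of the ratio of Gamma functions `g(α) = Γ(a+α)/Γ(b+α)`. -/
theorem gamma_ratio_monotone (a b : ℝ) :
    (a ≥ b → MonotoneOn (fun α : ℝ => Real.Gamma (a + α) / Real.Gamma (b + α))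
        {α : ℝ | 0 < b + α}) ∧
    (b ≥ a → AntitoneOn (fun α : ℝ => Real.Gamma (a + α) / Real.Gamma (b + α))
        {α : ℝ | 0 < a + α}) := by
  constructor
  · intro hab
    refine (exp_monotone.comp_monotoneOn
      (monotoneOn_log_Gamma_add_sub_log_Gamma_add hab)).congr ?_
    intro α (hα : 0 < b + α)
    exact (Gamma_div_Gamma_eq_exp (by linarith) hα).symm
  · intro hab
    refine (exp_monotone.comp_antitoneOn
      (monotoneOn_log_Gamma_add_sub_log_Gamma_add hab).neg).congr ?_
    intro α (hα : 0 < a + α)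
    simp only [Function.comp_apply, neg_sub]
    exact (Gamma_div_Gamma_eq_exp hα (by linarith)).symm
end

section
/- Let m ≥ 2 be an integer and let α be a real number with 0 < α < 1. Then (sin(πα)/π) · Γ(1+α) · Γ(m−α) / m! ≤ α·(1−α)·2^α / m^{1+α}. Moreover, for m = 1 one has (sin(πα)/π) · Γ(1+α) · Γ(1−α) = α. -/
/-!
Write `m = n + 2`. The reflection formula and `Γ(x + 1) = x Γ(x)` turn the left-hand side into
`α (1 - α) / m · ∏_{k < n} (1 - α / (k + 2))`. By Bernoulli's inequality
`(1 + 1/x)^α ≤ 1 + α/x`, each factor satisfies `1 - α/x ≤ (x / (x + 1))^α`, so the product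
telescopes to at most `(2 / m)^α`.
-/

open Real Finset Nat

lemma Real.Gamma_add_nat_eq_prod_mul {x : ℝ} (hx : 0 < x) (n : ℕ) :
    Gamma (x + n) = (∏ k ∈ range n, (x + k)) * Gamma x := by
  induction n with
  | zero => simp
  | succ n ih =>
    rw [Nat.cast_succ, ← add_assoc, Gamma_add_one (by positivity), ih, prod_range_succ]; ring

lemma Real.sin_div_pi_mul_Gamma_one_add_mul_Gamma_one_sub {α : ℝ} (hα : sin (π * α) ≠ 0) :
    sin (π * α) / π * Gamma (1 + α) * Gamma (1 - α) = α := by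
  have hα0 : α ≠ 0 := by rintro rfl; simp at hα
  calc sin (π * α) / π * Gamma (1 + α) * Gamma (1 - α)
      = α * (sin (π * α) / π * (Gamma α * Gamma (1 - α))) := by
        rw [add_comm, Gamma_add_one hα0]; ring
    _ = α := by
        rw [Gamma_mul_Gamma_one_sub, div_mul_div_cancel₀ pi_ne_zero, div_self hα, mul_one]

lemma sub_div_self_le_rpow_div_add_one {x α : ℝ} (hx : 0 < x) (hα0 : 0 ≤ α) (hα1 : α ≤ 1) :
    (x - α) / x ≤ (x / (x + 1)) ^ α := by
  have hbernoulli : (1 + 1 / x) ^ α ≤ 1 + α * (1 / x) :=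
    rpow_one_add_le_one_add_mul_self (by linarith [one_div_pos.2 hx]) hα0 hα1
  calc (x - α) / x ≤ x / (x + α) := by
        rw [div_le_div_iff₀ hx (by positivity)]; nlinarith
    _ = (1 + α * (1 / x))⁻¹ := by field_simp
    _ ≤ ((1 + 1 / x) ^ α)⁻¹ := inv_anti₀ (by positivity) hbernoulli
    _ = (x / (x + 1)) ^ α := by
        rw [← inv_rpow (by positivity)]; congr 1; field_simp

lemma prod_sub_div_le_rpow {x α : ℝ} (hx : 0 < x) (hα0 : 0 ≤ α) (hα1 : α ≤ 1) (hαx : α ≤ x)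
    (n : ℕ) : ∏ k ∈ range n, (x + k - α) / (x + k) ≤ (x / (x + n)) ^ α := by
  induction n with
  | zero => simp [div_self hx.ne']
  | succ n ih =>
    have hxn : 0 < x + n := by positivity
    calc ∏ k ∈ range (n + 1), (x + k - α) / (x + k)
        = (∏ k ∈ range n, (x + k - α) / (x + k)) * ((x + n - α) / (x + n)) := prod_range_succ ..
      _ ≤ (x / (x + n)) ^ α * ((x + n) / (x + n + 1)) ^ α := by
        gcongr
        · exact div_nonneg (by linarith [n.cast_nonneg (α := ℝ)]) hxn.le
        · exact sub_div_self_le_rpow_div_add_one hxn hα0 hα1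
      _ = (x / (x + ↑(n + 1))) ^ α := by
        rw [← mul_rpow (by positivity) (by positivity)]; congr 1; push_cast; field_simp; ring

theorem Phi_bound (m : ℕ) (hm : 2 ≤ m) (α : ℝ) (h0 : 0 < α) (h1 : α < 1) :
    Real.sin (Real.pi * α) / Real.pi * Real.Gamma (1 + α) * Real.Gamma ((m:ℝ) - α)
        / (m.factorial : ℝ)
      ≤ α * (1 - α) * (2:ℝ) ^ α / (m:ℝ) ^ (1 + α) ∧
    Real.sin (Real.pi * α) / Real.pi * Real.Gamma (1 + α) * Real.Gamma (1 - α) = α := by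
  have hsin : sin (π * α) ≠ 0 :=
    (sin_pos_of_pos_of_lt_pi (by positivity) (by nlinarith [pi_pos])).ne'
  have reflection := sin_div_pi_mul_Gamma_one_add_mul_Gamma_one_sub hsin
  refine ⟨?_, reflection⟩
  obtain ⟨n, rfl⟩ : ∃ n, m = n + 2 := ⟨m - 2, by omega⟩
  have hΓ : Gamma (↑(n + 2) - α) = (1 - α) * Gamma (1 - α) * ∏ k ∈ range n, (2 + k - α) := by
    rw [show (↑(n + 2) : ℝ) - α = 2 - α + n by push_cast; ring,
      Gamma_add_nat_eq_prod_mul (by linarith), show (2 : ℝ) - α = 1 - α + 1 by ring,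
      Gamma_add_one (by linarith), mul_comm]
    exact congrArg _ (prod_congr rfl fun k _ => by ring)
  have hfact : ((n + 2)! : ℝ) = (n + 2) * ∏ k ∈ range n, (2 + k : ℝ) := by
    rw [factorial_succ, Nat.cast_mul, ← Gamma_nat_eq_factorial,
      show (↑(n + 1) : ℝ) + 1 = 2 + n by push_cast; ring, Gamma_add_nat_eq_prod_mul two_pos,
      Gamma_two]
    push_cast; ring
  have hQ : ∏ k ∈ range n, (2 + k : ℝ) ≠ 0 := by positivity
  calc sin (π * α) / π * Gamma (1 + α) * Gamma (↑(n + 2) - α) / ↑(n + 2)!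
      = sin (π * α) / π * Gamma (1 + α) * Gamma (1 - α) * (1 - α) / (n + 2)
          * ∏ k ∈ range n, (2 + k - α) / (2 + k) := by
        rw [hΓ, hfact, prod_div_distrib]; field_simp
    _ ≤ α * (1 - α) / (n + 2) * (2 / (2 + n)) ^ α := by
        rw [reflection]
        gcongr
        exact prod_sub_div_le_rpow two_pos h0.le h1.le (by linarith) n
    _ = α * (1 - α) * 2 ^ α / ↑(n + 2) ^ (1 + α) := by
        rw [div_rpow zero_le_two (by positivity), rpow_add (by positivity), rpow_one]
        push_cast; rw [add_comm 2]; field_simp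
end

section
/- For every integer n ≥ 4, Σ_{s=1}^{n} 2^s / s ≤ 2^{n+1}/n + 2^{n+1}/(n−3)², where the sum and all quantities are real numbers. -/
/-!
Write `S n = ∑_{s=1}^n 2^s/s` and `B n = 2^(n+1)/n + 2^(n+1)/(n-3)^2`. For `n ≥ 8` the bound
absorbs the next term of the sum, `B n + 2^(n+1)/(n+1) ≤ B (n+1)`: after dividing by `2^(n+1)`
this is a rational inequality in `n`. So `S n ≤ B n` propagates by induction from `n = 8`, and the
finitely many cases `4 ≤ n ≤ 8` are checked numerically. (The step fails at `n = 7`.)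
-/

open Finset

lemma one_div_add_one_div_sub_three_sq_le {x : ℝ} (hx : 8 ≤ x) :
    1 / x + 1 / (x - 3) ^ 2 ≤ 1 / (x + 1) + 2 / (x - 2) ^ 2 := by
  have h2 : 0 < x - 3 := by linarith
  have h4 : 0 < x - 2 := by linarith
  rw [div_add_div _ _ (by positivity) (by positivity),
    div_add_div _ _ (by positivity) (by positivity),
    div_le_div_iff₀ (by positivity) (by positivity)]
  nlinarith [mul_pos h2 h2, mul_pos h4 h4, sq_nonneg (x - 8),
    mul_nonneg (mul_nonneg (by linarith : (0:ℝ) ≤ x - 8) h4.le) h4.le]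

lemma two_pow_bound_add_le_succ {n : ℕ} (hn : 8 ≤ n) :
    2 ^ (n + 1) / (n:ℝ) + 2 ^ (n + 1) / ((n:ℝ) - 3) ^ 2 + 2 ^ (n + 1) / ((n + 1 : ℕ):ℝ) ≤
      2 ^ (n + 2) / ((n + 1 : ℕ):ℝ) + 2 ^ (n + 2) / (((n + 1 : ℕ):ℝ) - 3) ^ 2 := by
  have hx : (8:ℝ) ≤ n := by exact_mod_cast hn
  push_cast
  calc 2 ^ (n + 1) / (n:ℝ) + 2 ^ (n + 1) / ((n:ℝ) - 3) ^ 2 + 2 ^ (n + 1) / ((n:ℝ) + 1)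
      = 2 ^ (n + 1) * (1 / n + 1 / ((n:ℝ) - 3) ^ 2 + 1 / ((n:ℝ) + 1)) := by ring
    _ ≤ 2 ^ (n + 1) * (1 / ((n:ℝ) + 1) + 2 / ((n:ℝ) - 2) ^ 2 + 1 / ((n:ℝ) + 1)) := by
      gcongr _ * (?_ + _)
      exact one_div_add_one_div_sub_three_sq_le hx
    _ = 2 ^ (n + 2) / ((n:ℝ) + 1) + 2 ^ (n + 2) / ((n:ℝ) + 1 - 3) ^ 2 := by ring

lemma sum_two_pow_div_le_of_le_eight {n : ℕ} (hn : 4 ≤ n) (h8 : n ≤ 8) :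
    ∑ s ∈ Icc 1 n, (2:ℝ) ^ s / (s:ℝ) ≤
      2 ^ (n + 1) / (n:ℝ) + 2 ^ (n + 1) / ((n:ℝ) - 3) ^ 2 := by
  interval_cases n <;> norm_num [sum_Icc_succ_top]

theorem sum_two_pow_div_le (n : ℕ) (hn : 4 ≤ n) :
    ∑ s ∈ Finset.Icc 1 n, (2:ℝ) ^ s / (s:ℝ) ≤
      2 ^ (n + 1) / (n:ℝ) + 2 ^ (n + 1) / ((n:ℝ) - 3) ^ 2 := by
  rcases le_total n 8 with h8 | h8
  · exact sum_two_pow_div_le_of_le_eight hn h8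
  induction n, h8 using Nat.le_induction with
  | base => exact sum_two_pow_div_le_of_le_eight hn le_rfl
  | succ n h8 ih =>
    rw [sum_Icc_succ_top (by omega)]
    linarith [ih (by omega), two_pow_bound_add_le_succ h8]
end

section
/- For every integer n ≥ 4, Σ_{s=2}^{n} binom(n, s) / (s − 1) ≤ (2^{n+1}/n) · (1 + 15/(n−3)), where binom(n, s) is the ordinary (natural number) binomial coefficient and the sum is taken in the real numbers. -/
/-!
Since `1 / (s - 1) ≤ 1 / (s + 1) + 8 / ((s + 1) (s + 2))` for `s ≥ 2`, and absorbing the factors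
`s + 1`, `s + 2` turns `binom(n, s)` into `binom(n + 1, s + 1) / (n + 1)` and
`binom(n + 2, s + 2) / ((n + 1) (n + 2))`, the sum is at most
`2^(n+1) / (n + 1) + 8 · 2^(n+2) / ((n + 1) (n + 2))`, which is below the claimed bound.
-/

open Finset

theorem Nat.sum_choose_le_two_pow (m : ℕ) (u : Finset ℕ) : ∑ j ∈ u, m.choose j ≤ 2 ^ m :=
  calc ∑ j ∈ u, m.choose j
      ≤ ∑ j ∈ u ∪ range (m + 1), m.choose j := sum_le_sum_of_subset subset_union_left
    _ = ∑ j ∈ range (m + 1), m.choose j := by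
        refine (sum_subset subset_union_right fun j _ hj => Nat.choose_eq_zero_of_lt ?_).symm
        simpa [Nat.lt_succ_iff] using hj
    _ = 2 ^ m := Nat.sum_range_choose m

theorem Nat.sum_choose_add_le_two_pow (m k : ℕ) (t : Finset ℕ) :
    ∑ s ∈ t, m.choose (s + k) ≤ 2 ^ m := by
  simpa using Nat.sum_choose_le_two_pow m (t.map (addRightEmbedding k))

section ChooseDiv

variable {K : Type*} [Field K] [CharZero K]

theorem Nat.cast_choose_div_add_one (n s : ℕ) :
    (n.choose s : K) / (s + 1) = ((n + 1).choose (s + 1) : K) / (n + 1) := by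
  rw [div_eq_div_iff (Nat.cast_add_one_ne_zero s) (Nat.cast_add_one_ne_zero n)]
  exact_mod_cast (mul_comm _ _).trans (Nat.add_one_mul_choose_eq n s)

theorem Nat.cast_choose_div_add_one_mul_add_two (n s : ℕ) :
    (n.choose s : K) / ((s + 1) * (s + 2)) =
      ((n + 2).choose (s + 2) : K) / ((n + 1) * (n + 2)) := by
  have h1 : ((n : K) + 1) * n.choose s = (n + 1).choose (s + 1) * (s + 1) := by
    exact_mod_cast Nat.add_one_mul_choose_eq n s
  have h2 : ((n : K) + 2) * (n + 1).choose (s + 1) = (n + 2).choose (s + 2) * (s + 2) := by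
    exact_mod_cast Nat.add_one_mul_choose_eq (n + 1) (s + 1)
  have hs : (s : K) + 2 ≠ 0 := by exact_mod_cast (s + 1).succ_ne_zero
  have hn : (n : K) + 2 ≠ 0 := by exact_mod_cast (n + 1).succ_ne_zero
  rw [div_eq_div_iff (mul_ne_zero (Nat.cast_add_one_ne_zero s) hs)
    (mul_ne_zero (Nat.cast_add_one_ne_zero n) hn)]
  linear_combination ((n : K) + 2) * h1 + ((s : K) + 1) * h2

end ChooseDiv

theorem one_div_sub_one_le_of_two_le (x : ℝ) (hx : 2 ≤ x) :
    1 / (x - 1) ≤ 1 / (x + 1) + 8 / ((x + 1) * (x + 2)) := by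
  have hx1 : 0 < x - 1 := by linarith
  rw [div_add_div _ _ (by positivity) (by positivity), div_le_div_iff₀ hx1 (by positivity)]
  nlinarith

theorem one_div_add_one_add_le_of_three_lt (x : ℝ) (hx : 3 < x) :
    1 / (x + 1) + 16 / ((x + 1) * (x + 2)) ≤ 1 / x * (1 + 15 / (x - 3)) := by
  have hx3 : 0 < x - 3 := by linarith
  have hx0 : 0 < x := by linarith
  rw [div_add_div _ _ (by positivity) (by positivity), one_add_div hx3.ne', div_mul_div_comm,
    div_le_div_iff₀ (by positivity) (by positivity)]
  nlinarith [pow_pos hx0 3, pow_pos hx0 4]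

theorem choose_div_sub_one_le (n s : ℕ) (hs : 2 ≤ s) :
    (n.choose s : ℝ) / (s - 1) ≤
      ((n + 1).choose (s + 1) : ℝ) / (n + 1) +
        8 * (((n + 2).choose (s + 2) : ℝ) / ((n + 1) * (n + 2))) := by
  rw [← Nat.cast_choose_div_add_one, ← Nat.cast_choose_div_add_one_mul_add_two]
  calc (n.choose s : ℝ) / (s - 1) = n.choose s * (1 / (s - 1)) := by ring
    _ ≤ n.choose s * (1 / (s + 1) + 8 / ((s + 1) * (s + 2))) := by
        gcongr
        exact one_div_sub_one_le_of_two_le s (by exact_mod_cast hs)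
    _ = _ := by ring

theorem sum_choose_div_le (n : ℕ) (hn : 4 ≤ n) :
    ∑ s ∈ Finset.Icc 2 n, (n.choose s : ℝ) / ((s:ℝ) - 1) ≤
      (2 ^ (n + 1) / (n:ℝ)) * (1 + 15 / ((n:ℝ) - 3)) := by
  have hsum₁ : ∑ s ∈ Icc 2 n, ((n + 1).choose (s + 1) : ℝ) ≤ 2 ^ (n + 1) := by
    exact_mod_cast Nat.sum_choose_add_le_two_pow (n + 1) 1 (Icc 2 n)
  have hsum₂ : ∑ s ∈ Icc 2 n, ((n + 2).choose (s + 2) : ℝ) ≤ 2 ^ (n + 2) := by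
    exact_mod_cast Nat.sum_choose_add_le_two_pow (n + 2) 2 (Icc 2 n)
  calc ∑ s ∈ Icc 2 n, (n.choose s : ℝ) / ((s : ℝ) - 1)
      ≤ ∑ s ∈ Icc 2 n, (((n + 1).choose (s + 1) : ℝ) / (n + 1)
          + 8 * (((n + 2).choose (s + 2) : ℝ) / ((n + 1) * (n + 2)))) :=
        sum_le_sum fun s hs => choose_div_sub_one_le n s (mem_Icc.1 hs).1
    _ = (∑ s ∈ Icc 2 n, ((n + 1).choose (s + 1) : ℝ)) / (n + 1)
          + 8 * ((∑ s ∈ Icc 2 n, ((n + 2).choose (s + 2) : ℝ)) / ((n + 1) * (n + 2))) := by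
        rw [sum_add_distrib, ← sum_div, ← mul_sum, ← sum_div]
    _ ≤ 2 ^ (n + 1) / (n + 1) + 8 * (2 ^ (n + 2) / ((n + 1) * (n + 2))) := by gcongr
    _ = 2 ^ (n + 1) * (1 / (n + 1) + 16 / ((n + 1) * (n + 2))) := by ring
    _ ≤ 2 ^ (n + 1) * (1 / n * (1 + 15 / (n - 3))) := by
        gcongr
        exact one_div_add_one_add_le_of_three_lt n (by exact_mod_cast hn)
    _ = 2 ^ (n + 1) / n * (1 + 15 / (n - 3)) := by ring
end
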